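/- Assume δ > 0 and consider the one-dimensional Jacobi equation: let r : ℝ → ℝ be smooth with r(t) ≥ δ for all t, and let j : ℝ → ℝ be a nonzero smooth solution of j''(t) + r(t)j(t) = 0 with j(a) = 0. Then j has a zero in the interval (a, a + π/√δ]. -/

import Mathlib

open Real Set

noncomputable section

variable {E : Type*} [NormedAddCommGroup E] [InnerProductSpace ℝ E] [FiniteDimensional ℝ E]

/-- `J` is an `R`-Jacobi field: a smooth map `J : ℝ → E` with `J'' + R J = 0`. -/
def IsJacobi (R : ℝ → E →L[ℝ] E) (J : ℝ → E) : Prop :=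
  ContDiff ℝ (⊤ : ℕ∞) J ∧ ∀ t : ℝ, deriv (deriv J) t + R t (J t) = 0

/-- The symplectic form `ω(X,Y) = ⟨X, Y'⟩ - ⟨X', Y⟩` (evaluated at `t = 0`). -/
def omegaForm (X Y : ℝ → E) : ℝ :=
  (inner ℝ (X 0) (deriv Y 0) : ℝ) - (inner ℝ (deriv X 0) (Y 0) : ℝ)

/-- A Lagrangian subspace of `Jac^R`: an isotropic subspace of Jacobi fields of
dimension `m = dim E`. -/
def IsLagrangian (R : ℝ → E →L[ℝ] E) (L : Submodule ℝ (ℝ → E)) : Prop :=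
  (∀ J ∈ L, IsJacobi R J) ∧ (∀ X ∈ L, ∀ Y ∈ L, omegaForm X Y = 0) ∧
    Module.finrank ℝ ↥L = Module.finrank ℝ E

/-- The index of a subspace `W` on a set `I`: `∑_{t ∈ I} dim {J ∈ W : J t = 0}`. -/
def jIndex (W : Submodule ℝ (ℝ → E)) (I : Set ℝ) : ℕ :=
  ∑ᶠ t ∈ I, Module.finrank ℝ ↥(W ⊓ LinearMap.ker (LinearMap.proj t : (ℝ → E) →ₗ[ℝ] E))


lemma sturm_aux
    (δ : ℝ) (hδ : 0 < δ)
    (r : ℝ → ℝ) (hrδ : ∀ t : ℝ, δ ≤ r t)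
    (j : ℝ → ℝ) (hj : ContDiff ℝ (⊤ : ℕ∞) j)
    (hjac : ∀ t : ℝ, deriv (deriv j) t + r t * j t = 0)
    (a : ℝ) (ha : j a = 0)
    (hpos : ∀ t ∈ Set.Ioc a (a + π / Real.sqrt δ), 0 < j t) : False := by
  set k : ℝ := Real.sqrt δ with hkdef
  have hk : 0 < k := Real.sqrt_pos.mpr hδ
  have hk2 : k * k = δ := Real.mul_self_sqrt hδ.le
  set b : ℝ := a + π / k with hbdef
  have hab : a < b := by
    have : 0 < π / k := div_pos Real.pi_pos hk
    simp [hbdef]; linarith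
  have hba : k * (b - a) = π := by
    rw [hbdef, add_sub_cancel_left]; field_simp
  set s : ℝ → ℝ := fun t => Real.sin (k * (t - a)) with hsdef
  set sd : ℝ → ℝ := fun t => Real.cos (k * (t - a)) * k with hsddef
  have hlin : ∀ t : ℝ, HasDerivAt (fun t => k * (t - a)) k t := by
    intro t
    simpa using ((hasDerivAt_id t).sub_const a).const_mul k
  have hs : ∀ t : ℝ, HasDerivAt s (sd t) t := by
    intro t
    exact (Real.hasDerivAt_sin (k * (t - a))).comp t (hlin t)
  have hsd : ∀ t : ℝ, HasDerivAt sd (-(δ * s t)) t := by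
    intro t
    have := ((Real.hasDerivAt_cos (k * (t - a))).comp t (hlin t)).mul_const k
    refine this.congr_deriv ?_
    show _ = -(δ * Real.sin (k * (t - a))); rw [← hk2]; ring
  have hdj : ∀ t : ℝ, HasDerivAt j (deriv j t) t :=
    fun t => (hj.differentiable (by simp) t).hasDerivAt
  have hj' : ContDiff ℝ ((⊤ : ℕ∞) : WithTop ℕ∞) (deriv j) :=
    (contDiff_infty_iff_deriv.mp (hj.of_le (by simp))).2
  have hddj : ∀ t : ℝ, HasDerivAt (deriv j) (deriv (deriv j) t) t :=
    fun t => (hj'.differentiable (by simp) t).hasDerivAt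
  set W : ℝ → ℝ := fun t => deriv j t * s t - j t * sd t with hWdef
  have hW : ∀ t : ℝ, HasDerivAt W ((δ - r t) * (j t * s t)) t := by
    intro t
    have h2 := ((hddj t).mul (hs t)).sub ((hdj t).mul (hsd t))
    have hj2 : deriv (deriv j) t = -(r t * j t) := by linarith [hjac t]
    refine h2.congr_deriv ?_
    rw [hj2]; ring
  have hmono : AntitoneOn W (Set.Icc a b) := by
    apply antitoneOn_of_deriv_nonpos (convex_Icc a b)
    · exact (Differentiable.continuous (fun t => (hW t).differentiableAt)).continuousOn
    · exact fun t _ => ((hW t).differentiableAt).differentiableWithinAt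
    · intro t ht
      rw [interior_Icc] at ht
      rw [(hW t).deriv]
      apply mul_nonpos_of_nonpos_of_nonneg
      · linarith [hrδ t]
      · apply mul_nonneg
        · exact (hpos t ⟨ht.1, ht.2.le⟩).le
        · apply Real.sin_nonneg_of_nonneg_of_le_pi
          · have := ht.1; nlinarith
          · have h1 : k * (t - a) < k * (b - a) := by
              have := ht.2; nlinarith
            rw [hba] at h1; linarith
  have hWa : W a = 0 := by
    simp [hWdef, hsdef, ha]
  have hWb : W b = j b * k := by
    simp only [hWdef, hsdef, hsddef, hba, Real.sin_pi, Real.cos_pi]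
    ring
  have hle : W b ≤ W a := hmono ⟨le_refl a, hab.le⟩ ⟨hab.le, le_refl b⟩ hab.le
  have hjb : 0 < j b := hpos b ⟨hab, le_refl b⟩
  nlinarith

/-- Sturm comparison: a nonzero solution of `j'' + r j = 0` with `r ≥ δ > 0`
that vanishes at `a` vanishes again in `(a, a + π/√δ]`. -/
theorem sturm_comparison
    (δ : ℝ) (hδ : 0 < δ)
    (r : ℝ → ℝ) (hr : ContDiff ℝ (⊤ : ℕ∞) r) (hrδ : ∀ t : ℝ, δ ≤ r t)
    (j : ℝ → ℝ) (hj : ContDiff ℝ (⊤ : ℕ∞) j) (hj0 : j ≠ 0)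
    (hjac : ∀ t : ℝ, deriv (deriv j) t + r t * j t = 0)
    (a : ℝ) (ha : j a = 0) :
    ∃ t ∈ Set.Ioc a (a + π / Real.sqrt δ), j t = 0 := by
  by_contra h
  push_neg at h
  set b : ℝ := a + π / Real.sqrt δ with hbdef
  have hk : 0 < Real.sqrt δ := Real.sqrt_pos.mpr hδ
  have hab : a < b := by
    have : 0 < π / Real.sqrt δ := div_pos Real.pi_pos hk
    simp [hbdef]; linarith
  have hjb : j b ≠ 0 := h b ⟨hab, le_refl b⟩
  rcases hjb.lt_or_gt with hneg | hposb
  · -- j b < 0 : apply aux to -j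
    have hnd : deriv (fun x => -j x) = fun x => -deriv j x :=
      funext fun x => deriv.neg
    refine sturm_aux δ hδ r hrδ (fun x => -j x) hj.neg ?_ a (by simp [ha]) ?_
    · intro t
      rw [hnd]
      rw [show deriv (fun x => -deriv j x) t = -deriv (deriv j) t from deriv.neg]
      show -deriv (deriv j) t + r t * (-(j t)) = 0
      linarith [hjac t]
    · intro t ht
      rcases lt_or_ge 0 (-j t) with h1 | h1
      · exact h1
      · exfalso
        have hjt : 0 < j t := by
          have := h t ht
          rcases this.lt_or_gt with h2 | h2
          · linarith
          · exact h2
        have hcont : ContinuousOn j (Set.Icc t b) := hj.continuous.continuousOn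
        have himg := intermediate_value_Icc' ht.2 hcont
        have h0 : (0 : ℝ) ∈ Set.Icc (j b) (j t) := ⟨hneg.le, hjt.le⟩
        obtain ⟨c, hc, hc0⟩ := himg h0
        exact h c ⟨lt_of_lt_of_le ht.1 hc.1, hc.2⟩ hc0
  · -- j b > 0
    refine sturm_aux δ hδ r hrδ j hj hjac a ha ?_
    intro t ht
    rcases lt_or_ge 0 (j t) with h1 | h1
    · exact h1
    · exfalso
      have hjt : j t < 0 := lt_of_le_of_ne h1 (h t ht)
      have hcont : ContinuousOn j (Set.Icc t b) := hj.continuous.continuousOn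
      have himg := intermediate_value_Icc ht.2 hcont
      have h0 : (0 : ℝ) ∈ Set.Icc (j t) (j b) := ⟨hjt.le, hposb.le⟩
      obtain ⟨c, hc, hc0⟩ := himg h0
      exact h c ⟨lt_of_lt_of_le ht.1 hc.1, hc.2⟩ hc0
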